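/- arXiv:2110.05735 — 4 statements merged into one kernel-verified Lean document; each statement's English description precedes it below -/
import Mathlib

section
/- Let θ0 < θ1 be positive reals, p0, p1 > 0 with p0 + p1 = 1, and τ ∈ ℤ₊. Then the function π(k) = ∑_{m=0}^{τ} [(λθ0)^{m+k} e^{-2λθ0} p0 + (λθ1)^{m+k} e^{-2λθ1} p1] / (m! · [(λθ0)^k e^{-λθ0} p0 + (λθ1)^k e^{-λθ1} p1]) is strictly decreasing in k ∈ ℤ₊. -/
/-!
Given `Y_i = k`, the posterior belief is the average of the Poisson CDFs `F_τ(λθ₀)` and `F_τ(λθ₁)`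
weighted by the posterior weights `(λθᵢ)^k e^{-λθᵢ} pᵢ`. Since `F_τ'(x) = -e^{-x} x^τ / τ!`, the
CDF strictly decreases in the rate, so `F_τ(λθ₁) < F_τ(λθ₀)`; and passing from `k` to `k + 1`
multiplies the weights by `λθ₀ < λθ₁`, shifting weight towards the smaller value.
-/

open Real Finset Nat

noncomputable def poissonCdf (τ : ℕ) (x : ℝ) : ℝ :=
  exp (-x) * ∑ m ∈ range (τ + 1), x ^ m / m !

theorem hasDerivAt_poissonCdf (τ : ℕ) (x : ℝ) :
    HasDerivAt (poissonCdf τ) (-(exp (-x) * x ^ τ / τ !)) x := by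
  induction τ with
  | zero =>
    have h0 : poissonCdf 0 = fun y => exp (-y) := by funext y; simp [poissonCdf]
    simpa [h0] using (hasDerivAt_neg x).exp
  | succ n ih =>
    have hterm : HasDerivAt (fun y => exp (-y) * y ^ (n + 1) / (n + 1)!)
        (exp (-x) * x ^ n / (n ! : ℝ) - exp (-x) * x ^ (n + 1) / ((n + 1)! : ℝ)) x := by
      refine (((hasDerivAt_neg x).exp.mul (hasDerivAt_pow (n + 1) x)).div_const
        ((n + 1)! : ℝ)).congr_deriv ?_
      rw [Nat.add_sub_cancel, Nat.factorial_succ]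
      push_cast
      field_simp
      ring
    have hsplit : poissonCdf (n + 1) =
        fun y => poissonCdf n y + exp (-y) * y ^ (n + 1) / (n + 1)! := by
      funext y
      simp only [poissonCdf, sum_range_succ _ (n + 1)]
      ring
    rw [hsplit]
    exact (ih.fun_add hterm).congr_deriv (by ring)

theorem poissonCdf_strictAntiOn (τ : ℕ) : StrictAntiOn (poissonCdf τ) (Set.Ici 0) := by
  refine strictAntiOn_of_deriv_neg (convex_Ici 0)
    (fun x _ => (hasDerivAt_poissonCdf τ x).continuousAt.continuousWithinAt) fun x hx => ?_
  rw [interior_Ici] at hx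
  rw [(hasDerivAt_poissonCdf τ x).deriv, neg_neg_iff_pos]
  have : 0 < x := hx
  positivity

theorem weighted_mean_lt_of_ratio_lt {A B u v u' v' : ℝ} (hw : 0 < u + v) (hw' : 0 < u' + v')
    (hBA : B < A) (h : v * u' < v' * u) :
    (A * u' + B * v') / (u' + v') < (A * u + B * v) / (u + v) := by
  rw [div_lt_div_iff₀ hw' hw]
  nlinarith [mul_pos (sub_pos.2 hBA) (sub_pos.2 h)]

theorem posterior_eq_weighted_poissonCdf (a b p0 p1 : ℝ) (τ k : ℕ) :
    ∑ m ∈ range (τ + 1),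
        (a ^ (m + k) * exp (-(2 * a)) * p0 + b ^ (m + k) * exp (-(2 * b)) * p1) /
          ((m ! : ℝ) * (a ^ k * exp (-a) * p0 + b ^ k * exp (-b) * p1)) =
      (poissonCdf τ a * (a ^ k * exp (-a) * p0) + poissonCdf τ b * (b ^ k * exp (-b) * p1)) /
        (a ^ k * exp (-a) * p0 + b ^ k * exp (-b) * p1) := by
  rw [poissonCdf, poissonCdf, mul_sum, mul_sum, sum_mul, sum_mul, ← sum_add_distrib]
  simp only [← div_div]
  rw [← sum_div]
  congr 1
  refine sum_congr rfl fun m _ => ?_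
  simp only [two_mul, neg_add, exp_add, pow_add]
  ring

theorem posterior_belief_strict_anti_general (l θ0 θ1 p0 p1 : ℝ) (hl : 0 < l)
    (h0 : 0 < θ0) (h01 : θ0 < θ1) (hp0 : 0 < p0) (hp1 : 0 < p1)
    (τ : ℕ) :
    StrictAnti (fun k : ℕ =>
      ∑ m ∈ Finset.range (τ + 1),
        ((l * θ0) ^ (m + k) * Real.exp (-(2 * l * θ0)) * p0 +
         (l * θ1) ^ (m + k) * Real.exp (-(2 * l * θ1)) * p1) /
        ((Nat.factorial m) *
          ((l * θ0) ^ k * Real.exp (-(l * θ0)) * p0 +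
           (l * θ1) ^ k * Real.exp (-(l * θ1)) * p1))) := by
  have ha : 0 < l * θ0 := mul_pos hl h0
  have hab : l * θ0 < l * θ1 := mul_lt_mul_of_pos_left h01 hl
  simp only [mul_assoc 2 l, posterior_eq_weighted_poissonCdf]
  set a := l * θ0
  set b := l * θ1
  have hb : 0 < b := ha.trans hab
  refine strictAnti_nat_of_succ_lt fun k => weighted_mean_lt_of_ratio_lt (by positivity)
    (by positivity) (poissonCdf_strictAntiOn τ ha.le hb.le hab) ?_
  have huv : 0 < (a ^ k * exp (-a) * p0) * (b ^ k * exp (-b) * p1) := by positivity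
  rw [pow_succ, pow_succ]
  nlinarith

theorem posterior_belief_strict_anti (l θ0 θ1 p0 p1 : ℝ) (hl : 0 < l)
    (h0 : 0 < θ0) (h01 : θ0 < θ1) (hp0 : 0 < p0) (hp1 : 0 < p1) (hp : p0 + p1 = 1)
    (τ : ℕ) :
    StrictAnti (fun k : ℕ =>
      ∑ m ∈ Finset.range (τ + 1),
        ((l * θ0) ^ (m + k) * Real.exp (-(2 * l * θ0)) * p0 +
         (l * θ1) ^ (m + k) * Real.exp (-(2 * l * θ1)) * p1) /
        ((Nat.factorial m) *
          ((l * θ0) ^ k * Real.exp (-(l * θ0)) * p0 +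
           (l * θ1) ^ k * Real.exp (-(l * θ1)) * p1))) :=
  posterior_belief_strict_anti_general l θ0 θ1 p0 p1 hl h0 h01 hp0 hp1 τ
end

section
/- For every τ ∈ ℤ₊, the function π(k) = ∑_{m=0}^{τ} 2^{-(m+k+1)} · C(k+m, k) is strictly decreasing in k ∈ ℤ₊. -/
/-!
Given `Y_i = k`, the rate has a Gamma(k+1, 1) posterior, so `Y_j` is negative binomial: the
number of failures before the `(k+1)`-th success in fair coin flips, and `π(k)` is its CDF at `τ`.
Raising `k` by one costs exactly the event "`k+1` successes and `τ+1` failures in the first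
`k+τ+2` flips, ending with a failure", so `π(k) - π(k+1) = C(k+τ+1, k+1) / 2^(k+τ+2) > 0`.
Pascal's rule proves this identity by induction on `τ`, for any success probability `p`.
-/

open Finset

/-- The probability of at most `τ` failures before the `(k+1)`-th success, when a success has
probability `p` and a failure `q`. -/
def negBinomialCDF {R : Type*} [CommRing R] (p q : R) (k τ : ℕ) : R :=
  ∑ m ∈ range (τ + 1), ((k + m).choose k : R) * p ^ (k + 1) * q ^ m

section CommRing

variable {R : Type*} [CommRing R] {p q : R}

theorem negBinomialCDF_succ (p q : R) (k τ : ℕ) :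
    negBinomialCDF p q k (τ + 1) =
      negBinomialCDF p q k τ + ((k + τ + 1).choose k : R) * p ^ (k + 1) * q ^ (τ + 1) := by
  rw [negBinomialCDF, sum_range_succ, ← negBinomialCDF, ← add_assoc]

theorem negBinomialCDF_sub_negBinomialCDF_succ (hpq : p + q = 1) (k τ : ℕ) :
    negBinomialCDF p q k τ - negBinomialCDF p q (k + 1) τ =
      ((k + τ + 1).choose (k + 1) : R) * p ^ (k + 1) * q ^ (τ + 1) := by
  obtain rfl : q = 1 - p := eq_sub_of_add_eq' hpq
  induction τ with
  | zero =>
    simp only [negBinomialCDF, zero_add, sum_range_one, add_zero, Nat.choose_self, Nat.cast_one]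
    ring
  | succ τ ih =>
    rw [negBinomialCDF_succ, negBinomialCDF_succ, add_sub_add_comm, ih,
      show k + 1 + τ + 1 = k + τ + 1 + 1 by ring, show k + (τ + 1) + 1 = k + τ + 1 + 1 by ring,
      Nat.choose_succ_succ' (k + τ + 1) k, Nat.cast_add]
    ring

end CommRing

theorem negBinomialCDF_strictAnti {R : Type*} [CommRing R] [PartialOrder R]
    [IsStrictOrderedRing R] {p q : R} (hp : 0 < p) (hq : 0 < q) (hpq : p + q = 1) (τ : ℕ) :
    StrictAnti fun k => negBinomialCDF p q k τ :=
  strictAnti_nat_of_succ_lt fun k => sub_pos.mp <| by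
    rw [negBinomialCDF_sub_negBinomialCDF_succ hpq]
    have := Nat.choose_pos (show k + 1 ≤ k + τ + 1 by omega)
    positivity

theorem belief_strict_anti_uniform (τ : ℕ) :
    StrictAnti (fun k : ℕ =>
      ∑ m ∈ Finset.range (τ + 1),
        (2 : ℝ) ^ (-((m : ℤ) + k + 1)) * ((k + m).choose k)) := by
  have term_eq (k m : ℕ) : (2 : ℝ) ^ (-((m : ℤ) + k + 1)) * ((k + m).choose k) =
      ((k + m).choose k : ℝ) * 2⁻¹ ^ (k + 1) * 2⁻¹ ^ m := by
    rw [zpow_neg, ← inv_zpow, show (m : ℤ) + k + 1 = ((k + 1 + m : ℕ) : ℤ) by push_cast; ring,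
      zpow_natCast, pow_add]
    ring
  simp_rw [term_eq]
  exact negBinomialCDF_strictAnti (by norm_num) (by norm_num) (by norm_num) τ
end

section
/- For every k ∈ ℤ₊, ∑_{m=0}^{∞} [(k−m+1)/(m+k+1)] · C(m+k+1, k+1) · 2^{-(k+m+2)} = 0. -/
/-! The summand equals `C(m+k, k) 2^{-(k+m+1)} - C(m+k+1, k+1) 2^{-(k+m+2)}`, the difference of
the `m`-th weights of two negative binomial distributions with parameter `1/2`. Each of these
weight sequences sums to `1`, so the series sums to `1 - 1 = 0`. -/

lemma hasSum_choose_mul_two_zpow (k : ℕ) :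
    HasSum (fun m : ℕ => ((m + k).choose k : ℝ) * (2 : ℝ) ^ (-((k : ℤ) + m + 1))) 1 := by
  have hgeom := (hasSum_choose_mul_geometric_of_norm_lt_one k
    (show ‖(2⁻¹ : ℝ)‖ < 1 by norm_num)).mul_right ((2⁻¹ : ℝ) ^ (k + 1))
  have hsum : 1 / (1 - 2⁻¹ : ℝ) ^ (k + 1) * (2⁻¹ : ℝ) ^ (k + 1) = 1 := by
    rw [show (1 - 2⁻¹ : ℝ) = 2⁻¹ by norm_num, one_div_mul_cancel (by positivity)]
  have hterm (m : ℕ) : ((m + k).choose k : ℝ) * (2 : ℝ) ^ (-((k : ℤ) + m + 1)) =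
      ((m + k).choose k : ℝ) * (2⁻¹ : ℝ) ^ m * (2⁻¹ : ℝ) ^ (k + 1) := by
    rw [mul_assoc, ← pow_add, inv_pow, ← zpow_natCast, ← zpow_neg]
    push_cast
    ring_nf
  simpa only [hterm, hsum] using hgeom

lemma choose_mul_two_zpow_sub_succ (k m : ℕ) :
    ((m + k).choose k : ℝ) * (2 : ℝ) ^ (-((k : ℤ) + m + 1)) -
        ((m + (k + 1)).choose (k + 1) : ℝ) * (2 : ℝ) ^ (-(((k + 1 : ℕ) : ℤ) + m + 1)) =
      (((k : ℝ) - m + 1) / ((m : ℝ) + k + 1)) * ((m + k + 1).choose (k + 1)) *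
        (2 : ℝ) ^ (-((k : ℤ) + m + 2)) := by
  have hchoose : ((m : ℝ) + k + 1) * ((m + k).choose k : ℝ) =
      ((m + k + 1).choose (k + 1) : ℝ) * (k + 1) := by
    exact_mod_cast Nat.add_one_mul_choose_eq (m + k) k
  have hpow : (2 : ℝ) ^ (-((k : ℤ) + m + 1)) = 2 * (2 : ℝ) ^ (-((k : ℤ) + m + 2)) := by
    rw [show -((k : ℤ) + m + 1) = 1 + -((k : ℤ) + m + 2) by ring, zpow_add₀ two_ne_zero,
      zpow_one]
  rw [hpow, show m + (k + 1) = m + k + 1 by ring,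
    show -(((k + 1 : ℕ) : ℤ) + m + 1) = -((k : ℤ) + m + 2) by push_cast; ring]
  generalize (2 : ℝ) ^ (-((k : ℤ) + m + 2)) = x
  field_simp
  linear_combination 2 * x * hchoose

theorem infinite_difference_vanishes (k : ℕ) :
    ∑' m : ℕ, (((k : ℝ) - m + 1) / ((m : ℝ) + k + 1)) * ((m + k + 1).choose (k + 1)) *
        (2 : ℝ) ^ (-((k : ℤ) + m + 2)) = 0 := by
  have hdiff := (hasSum_choose_mul_two_zpow k).sub (hasSum_choose_mul_two_zpow (k + 1))
  rw [sub_self] at hdiff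
  simp only [choose_mul_two_zpow_sub_succ] at hdiff
  exact hdiff.tsum_eq
end

section
/- For every k ∈ ℤ₊ and every finite τ ∈ ℤ₊, ∑_{m=0}^{τ} [C(k+m,k) − (1/2)C(k+1+m,k+1)] · 2^{-(k+m+1)} > 0; equivalently, π(k) > π(k+1) where π(k) = ∑_{m=0}^{τ} 2^{-(m+k+1)} C(k+m,k). -/
/-!
Pascal's rule `C(k+m+1, k+1) = C(k+m, k) + C(k+m, k+1)` makes the `m`-th summand
`(C(k+m, k) - C(k+1+m, k+1) / 2) 2^{-(k+m+1)}` the difference `a (m+1) - a m` of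
`a m = 2^{-(k+m+1)} C(k+m, k+1)`. The sum telescopes to `a (τ+1) > 0`, since `a 0 = 0`,
and it is exactly `π(k) - π(k+1)`.
-/

open Finset

/-- The posterior belief `π(k)`, with the series truncated at `τ`. -/
noncomputable def belief (τ k : ℕ) : ℝ :=
  ∑ m ∈ range (τ + 1), (2 : ℝ) ^ (-((m : ℤ) + k + 1)) * ((k + m).choose k)

lemma choose_sub_half_choose_succ_mul_zpow (k m : ℕ) :
    (((k + m).choose k : ℝ) - 1 / 2 * ((k + 1 + m).choose (k + 1))) *
        (2 : ℝ) ^ (-((k : ℤ) + m + 1)) =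
      (2 : ℝ) ^ (-((k : ℤ) + (m + 1 : ℕ) + 1)) * ((k + (m + 1)).choose (k + 1)) -
        (2 : ℝ) ^ (-((k : ℤ) + m + 1)) * ((k + m).choose (k + 1)) := by
  have hzpow : (2 : ℝ) ^ (-((k : ℤ) + (m + 1 : ℕ) + 1)) = (2 : ℝ) ^ (-((k : ℤ) + m + 1)) / 2 := by
    rw [show -((k : ℤ) + (m + 1 : ℕ) + 1) = -((k : ℤ) + m + 1) - 1 by push_cast; ring,
      zpow_sub_one₀ two_ne_zero, div_eq_mul_inv]
  rw [hzpow, show k + (m + 1) = k + m + 1 by ring, show k + 1 + m = k + m + 1 by ring,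
    Nat.choose_succ_succ]
  push_cast
  ring

lemma sum_range_choose_sub_half_choose_succ_mul_zpow (k τ : ℕ) :
    ∑ m ∈ range (τ + 1), (((k + m).choose k : ℝ) - 1 / 2 * ((k + 1 + m).choose (k + 1))) *
        (2 : ℝ) ^ (-((k : ℤ) + m + 1)) =
      (2 : ℝ) ^ (-((k : ℤ) + (τ + 1 : ℕ) + 1)) * ((k + (τ + 1)).choose (k + 1)) := by
  simp_rw [choose_sub_half_choose_succ_mul_zpow]
  rw [sum_range_sub (fun m => (2 : ℝ) ^ (-((k : ℤ) + m + 1)) * ((k + m).choose (k + 1))),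
    add_zero, Nat.choose_succ_self]
  simp only [Nat.cast_zero, mul_zero, sub_zero]

lemma sum_range_choose_sub_half_choose_succ_mul_zpow_pos (k τ : ℕ) :
    0 < ∑ m ∈ range (τ + 1), (((k + m).choose k : ℝ) - 1 / 2 * ((k + 1 + m).choose (k + 1))) *
        (2 : ℝ) ^ (-((k : ℤ) + m + 1)) := by
  rw [sum_range_choose_sub_half_choose_succ_mul_zpow]
  have hchoose : 0 < (k + (τ + 1)).choose (k + 1) := Nat.choose_pos (by omega)
  positivity

lemma belief_sub_belief_succ (τ k : ℕ) :
    belief τ k - belief τ (k + 1) =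
      ∑ m ∈ range (τ + 1), (((k + m).choose k : ℝ) - 1 / 2 * ((k + 1 + m).choose (k + 1))) *
        (2 : ℝ) ^ (-((k : ℤ) + m + 1)) := by
  rw [belief, belief, ← sum_sub_distrib]
  refine sum_congr rfl fun m _ => ?_
  rw [show -((m : ℤ) + (k + 1 : ℕ) + 1) = -((k : ℤ) + m + 1) - 1 by push_cast; ring,
    show -((m : ℤ) + k + 1) = -((k : ℤ) + m + 1) by ring, zpow_sub_one₀ two_ne_zero]
  ring

theorem belief_strict_decrease (k τ : ℕ) :
    (0 < ∑ m ∈ Finset.range (τ + 1),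
        (((k + m).choose k : ℝ) - (1 / 2) * ((k + 1 + m).choose (k + 1))) *
          (2 : ℝ) ^ (-((k : ℤ) + m + 1))) ∧
    (∑ m ∈ Finset.range (τ + 1),
        (2 : ℝ) ^ (-((m : ℤ) + (k + 1) + 1)) * (((k + 1) + m).choose (k + 1)) <
     ∑ m ∈ Finset.range (τ + 1),
        (2 : ℝ) ^ (-((m : ℤ) + k + 1)) * ((k + m).choose k)) := by
  have hpos := sum_range_choose_sub_half_choose_succ_mul_zpow_pos k τ
  have hdecrease : belief τ (k + 1) < belief τ k := by
    rw [← sub_pos, belief_sub_belief_succ]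
    exact hpos
  refine ⟨hpos, ?_⟩
  simpa only [belief, Nat.cast_add, Nat.cast_one] using hdecrease
end
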